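/- arXiv:1709.08044 — 3 statements merged into one kernel-verified Lean document; each statement's English description precedes it below -/
import Mathlib

section
/- Hájek–Rényi inequality (classical): let X_1, …, X_n be independent real random variables with mean zero and finite variance, and let α_1 ≥ α_2 ≥ … ≥ α_n > 0. Then for every t > 0, P(max_{1≤k≤n} α_k |Σ_{i=1}^k X_i| ≥ t) ≤ t⁻² Σ_{k=1}^n α_k² Var(X_k). -/
/-!
Write `S m` for the sum of the first `m` variables. Then `S m ^ 2` is a nonnegative submartingale
for the filtration generated by the `X i`: the cross term `S m * X m` integrates to zero over
every event determined by the earlier variables, and the increments of `E[S m ^ 2]` are the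
variances. For any nonnegative submartingale `Z` and antitone weights `c ≥ 0`, split the event
`{∃ j, t ≤ c j * Z (j + 1)}` by the first such `j`. On the `m`-th piece `t ≤ c m * Z (m + 1)`;
the submartingale property on the event of an earlier exceedance, followed by Abel summation
against the antitone `c`, gives `t * P(…) ≤ c 0 * E[Z 0] + ∑ c m * (E[Z (m + 1)] - E[Z m])`.
Apply this with `Z = S ^ 2`, `c = α ^ 2` and the level `t ^ 2`.
-/

open MeasureTheory ProbabilityTheory Finset

lemma mul_sub_mul_le_sum_range_mul_sub {c w : ℕ → ℝ} (hc : Antitone c) (hw : 0 ≤ w) (n : ℕ) :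
    c n * w n - c 0 * w 0 ≤ ∑ m ∈ range n, c m * (w (m + 1) - w m) := by
  induction n with
  | zero => simp
  | succ n ih =>
    rw [sum_range_succ]
    nlinarith [mul_le_mul_of_nonneg_right (hc n.le_succ) (hw (n + 1))]

namespace MeasureTheory

variable {Ω : Type*} {m0 : MeasurableSpace Ω} {μ : Measure Ω} {ℱ : Filtration ℕ m0}
  {Z : ℕ → Ω → ℝ} {c : ℕ → ℝ} {t : ℝ}

def exceedSet (c : ℕ → ℝ) (Z : ℕ → Ω → ℝ) (t : ℝ) (m : ℕ) : Set Ω :=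
  {ω | ∃ j < m, t ≤ c j * Z (j + 1) ω}

@[simp]
lemma exceedSet_zero : exceedSet c Z t 0 = ∅ := by
  simp [exceedSet]

lemma exceedSet_mono : Monotone (exceedSet c Z t) :=
  fun _ _ hmk _ ⟨j, hj, hω⟩ => ⟨j, hj.trans_le hmk, hω⟩

lemma exceedSet_succ_sdiff_subset (m : ℕ) :
    exceedSet c Z t (m + 1) \ exceedSet c Z t m ⊆ {ω | t ≤ c m * Z (m + 1) ω} := by
  rintro ω ⟨⟨j, hj, hω⟩, hnot⟩
  obtain rfl : j = m := by
    by_contra hjm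
    exact hnot ⟨j, by omega, hω⟩
  exact hω

lemma StronglyAdapted.measurableSet_exceedSet (hZ : StronglyAdapted ℱ Z) (m : ℕ) :
    MeasurableSet[ℱ m] (exceedSet c Z t m) := by
  have : exceedSet c Z t m = ⋃ j ∈ Set.Iio m, {ω | t ≤ c j * Z (j + 1) ω} := by
    ext ω; simp [exceedSet]
  rw [this]
  refine MeasurableSet.biUnion (Set.to_countable _) fun j (hj : j < m) => ?_
  exact measurableSet_le measurable_const
    (((hZ (j + 1)).measurable.mono (ℱ.mono hj) le_rfl).const_mul _)

lemma Submartingale.mul_measureReal_exceedSet_succ_sdiff_le [IsFiniteMeasure μ]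
    (hZ : Submartingale Z ℱ μ) (hc : 0 ≤ c) (m : ℕ) :
    t * μ.real (exceedSet c Z t (m + 1) \ exceedSet c Z t m)
      ≤ c m * (∫ ω in exceedSet c Z t (m + 1), Z (m + 1) ω ∂μ
        - ∫ ω in exceedSet c Z t m, Z m ω ∂μ) := by
  set B := exceedSet c Z t
  have hB : ∀ k, MeasurableSet (B k) := fun k => ℱ.le k _ (hZ.1.measurableSet_exceedSet k)
  have hZint := (hZ.integrable (m + 1)).integrableOn (s := B (m + 1))
  calc t * μ.real (B (m + 1) \ B m) = ∫ _ in B (m + 1) \ B m, t ∂μ := by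
        rw [setIntegral_const, smul_eq_mul, mul_comm]
    _ ≤ ∫ ω in B (m + 1) \ B m, c m * Z (m + 1) ω ∂μ :=
        setIntegral_mono_on integrableOn_const ((hZint.mono_set Set.sdiff_subset).const_mul _)
          ((hB _).diff (hB m)) fun ω hω => exceedSet_succ_sdiff_subset m hω
    _ = c m * (∫ ω in B (m + 1), Z (m + 1) ω ∂μ - ∫ ω in B m, Z (m + 1) ω ∂μ) := by
        rw [integral_const_mul, setIntegral_sdiff (hB m) hZint (exceedSet_mono m.le_succ)]
    _ ≤ _ := by
        gcongr ?_ * (_ - ?_)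
        · exact hc m
        · exact hZ.setIntegral_le m.le_succ (hZ.1.measurableSet_exceedSet m)

/-- Chow's maximal inequality; for constant `c` it is Doob's. -/
theorem Submartingale.mul_measureReal_exceedSet_le [IsFiniteMeasure μ]
    (hZ : Submartingale Z ℱ μ) (hZ_nonneg : 0 ≤ Z) (hc : Antitone c) (hc_nonneg : 0 ≤ c) (n : ℕ) :
    t * μ.real (exceedSet c Z t n)
      ≤ c 0 * μ[Z 0] + ∑ m ∈ range n, c m * (μ[Z (m + 1)] - μ[Z m]) := by
  set B := exceedSet c Z t
  have hB : ∀ k, MeasurableSet (B k) := fun k => ℱ.le k _ (hZ.1.measurableSet_exceedSet k)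
  set H : ℕ → ℝ := fun m => ∫ ω in B m, Z m ω ∂μ
  set V : ℕ → ℝ := fun m => μ[Z m]
  have hHV : 0 ≤ V - H := fun m => sub_nonneg.2 <|
    setIntegral_le_integral (hZ.integrable m) (.of_forall (hZ_nonneg m))
  have hH0 : H 0 = 0 := by simp [H, B]
  have abel := mul_sub_mul_le_sum_range_mul_sub hc hHV n
  have hcn : 0 ≤ c n * (V - H) n := mul_nonneg (hc_nonneg n) (hHV n)
  have hsplit : ∑ m ∈ range n, c m * ((V - H) (m + 1) - (V - H) m)
      = ∑ m ∈ range n, c m * (V (m + 1) - V m) - ∑ m ∈ range n, c m * (H (m + 1) - H m) := by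
    rw [← sum_sub_distrib]
    refine sum_congr rfl fun m _ => ?_
    simp only [Pi.sub_apply]
    ring
  calc t * μ.real (B n) = ∑ m ∈ range n, t * μ.real (B (m + 1) \ B m) := by
        have hdiff m : μ.real (B (m + 1) \ B m) = μ.real (B (m + 1)) - μ.real (B m) :=
          measureReal_sdiff (exceedSet_mono m.le_succ) (hB m)
        simp_rw [← mul_sum, hdiff, sum_range_sub (fun m => μ.real (B m)), B, exceedSet_zero,
          measureReal_empty, sub_zero]
    _ ≤ ∑ m ∈ range n, c m * (H (m + 1) - H m) :=
        sum_le_sum fun m _ => hZ.mul_measureReal_exceedSet_succ_sdiff_le hc_nonneg m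
    _ ≤ c 0 * V 0 + ∑ m ∈ range n, c m * (V (m + 1) - V m) := by
        rw [hsplit] at abel
        simp only [Pi.sub_apply, hH0, sub_zero] at abel hcn
        linarith

end MeasureTheory

namespace ProbabilityTheory

variable {Ω : Type*} {m0 : MeasurableSpace Ω} {μ : Measure Ω} {n : ℕ}

def prefixFiltration {β : Type*} [MeasurableSpace β] (X : Fin n → Ω → β)
    (hX : ∀ i, Measurable (X i)) : Filtration ℕ m0 where
  seq m := ⨆ i ∈ {i : Fin n | (i : ℕ) < m}, MeasurableSpace.comap (X i) inferInstance
  mono' _ _ hmk := biSup_mono fun _ hi => lt_of_lt_of_le hi hmk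
  le' _ := iSup₂_le fun i _ => (hX i).comap_le

lemma iIndepFun.indep_prefixFiltration {β : Type*} [MeasurableSpace β] {X : Fin n → Ω → β}
    (hX : ∀ i, Measurable (X i)) (hindep : iIndepFun X μ) (k : Fin n) :
    Indep (prefixFiltration X hX k) (MeasurableSpace.comap (X k) inferInstance) μ := by
  refine indep_of_indep_of_le_right (indep_iSup_of_disjoint (fun i => (hX i).comap_le) hindep
    (S := {i : Fin n | (i : ℕ) < k}) (T := {k}) (by simp)) ?_
  exact le_iSup₂_of_le k rfl le_rfl

def partialSum (X : Fin n → Ω → ℝ) (m : ℕ) (ω : Ω) : ℝ :=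
  ∑ i ∈ univ.filter fun i : Fin n => (i : ℕ) < m, X i ω

variable {X : Fin n → Ω → ℝ}

@[simp]
lemma partialSum_zero : partialSum X 0 = 0 := by
  ext ω; simp [partialSum]

lemma partialSum_succ (k : Fin n) : partialSum X (k + 1) = partialSum X k + X k := by
  ext ω
  have : univ.filter (fun i : Fin n => (i : ℕ) < k + 1)
      = insert k (univ.filter fun i : Fin n => (i : ℕ) < k) := by
    ext i; simp [Fin.ext_iff]; omega
  simp only [partialSum, Pi.add_apply, this]
  rw [sum_insert (by simp), add_comm]

lemma partialSum_succ_of_le {m : ℕ} (hm : n ≤ m) : partialSum X (m + 1) = partialSum X m := by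
  ext ω
  have : univ.filter (fun i : Fin n => (i : ℕ) < m + 1)
      = univ.filter fun i : Fin n => (i : ℕ) < m := by
    ext i; simp; omega
  simp only [partialSum, this]

lemma partialSum_eq_sum_le (k : Fin n) (ω : Ω) :
    partialSum X (k + 1) ω = ∑ i ∈ univ.filter (· ≤ k), X i ω := by
  refine sum_congr ?_ fun _ _ => rfl
  ext i
  simp only [mem_filter, mem_univ, true_and, Fin.le_iff_val_le_val]
  omega

lemma setOf_exists_le_mul_abs_sum_eq_exceedSet {α : Fin n → ℝ} (hα : 0 ≤ α) {t : ℝ} (ht : 0 ≤ t) :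
    {ω | ∃ k : Fin n, t ≤ α k * |∑ i ∈ univ.filter (· ≤ k), X i ω|}
      = exceedSet (fun m => if h : m < n then α ⟨m, h⟩ ^ 2 else 0)
          (fun m ω => partialSum X m ω ^ 2) (t ^ 2) n := by
  have hexceed (k : Fin n) (ω : Ω) : t ≤ α k * |∑ i ∈ univ.filter (· ≤ k), X i ω|
      ↔ t ^ 2 ≤ α k ^ 2 * partialSum X (k + 1) ω ^ 2 := by
    rw [partialSum_eq_sum_le, ← sq_abs (∑ i ∈ _, _), ← mul_pow,
      sq_le_sq₀ ht (mul_nonneg (hα k) (abs_nonneg _))]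
  ext ω
  constructor
  · rintro ⟨k, hk⟩
    exact ⟨k, k.2, by simpa [k.2] using (hexceed k ω).1 hk⟩
  · rintro ⟨j, hj, hω⟩
    exact ⟨⟨j, hj⟩, (hexceed ⟨j, hj⟩ ω).2 (by simpa [hj] using hω)⟩

lemma stronglyAdapted_partialSum (hX : ∀ i, Measurable (X i)) :
    StronglyAdapted (prefixFiltration X hX) (partialSum X) := by
  intro m
  have hXm : ∀ i : Fin n, (i : ℕ) < m → Measurable[prefixFiltration X hX m] (X i) :=
    fun i hi => Measurable.of_comap_le (le_iSup₂_of_le i hi le_rfl)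
  exact (Finset.measurable_sum _ fun i hi => hXm i (by simpa using hi)).stronglyMeasurable

lemma memLp_partialSum (hL2 : ∀ i, MemLp (X i) 2 μ) (m : ℕ) : MemLp (partialSum X m) 2 μ :=
  memLp_finsetSum _ fun i _ => hL2 i

lemma setIntegral_partialSum_mul_eq_zero (hX : ∀ i, Measurable (X i)) (hindep : iIndepFun X μ)
    (hmean : ∀ i, μ[X i] = 0) (k : Fin n) {s : Set Ω}
    (hs : MeasurableSet[prefixFiltration X hX k] s) :
    ∫ ω in s, partialSum X k ω * X k ω ∂μ = 0 := by
  have hP := (stronglyAdapted_partialSum hX k).measurable.indicator hs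
  have hindepP : s.indicator (partialSum X k) ⟂ᵢ[μ] X k :=
    (IndepFun_iff_Indep _ _ _).2
      (indep_of_indep_of_le_left (hindep.indep_prefixFiltration hX k) hP.comap_le)
  rw [← integral_indicator ((prefixFiltration X hX).le k _ hs)]
  simp_rw [Set.indicator_mul_left]
  rw [hindepP.integral_fun_mul_eq_mul_integral
    (hP.mono ((prefixFiltration X hX).le k) le_rfl).aestronglyMeasurable
    (hX k).aestronglyMeasurable, hmean k, mul_zero]

lemma setIntegral_sq_partialSum_succ (hX : ∀ i, Measurable (X i)) (hindep : iIndepFun X μ)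
    (hL2 : ∀ i, MemLp (X i) 2 μ) (hmean : ∀ i, μ[X i] = 0) (k : Fin n) {s : Set Ω}
    (hs : MeasurableSet[prefixFiltration X hX k] s) :
    ∫ ω in s, partialSum X (k + 1) ω ^ 2 ∂μ
      = ∫ ω in s, partialSum X k ω ^ 2 ∂μ + ∫ ω in s, X k ω ^ 2 ∂μ := by
  have hPX : Integrable (fun ω => partialSum X k ω * X k ω) μ :=
    (memLp_partialSum hL2 k).integrable_mul (hL2 k)
  have hcross := setIntegral_partialSum_mul_eq_zero hX hindep hmean k hs
  have hexpand ω : partialSum X (k + 1) ω ^ 2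
      = partialSum X k ω ^ 2 + X k ω ^ 2 + 2 * (partialSum X k ω * X k ω) := by
    rw [partialSum_succ, Pi.add_apply]
    ring
  have hsq : IntegrableOn (fun ω => partialSum X k ω ^ 2 + X k ω ^ 2) s μ :=
    ((memLp_partialSum hL2 k).integrable_sq.add (hL2 k).integrable_sq).integrableOn
  simp_rw [hexpand]
  rw [integral_add hsq (hPX.const_mul 2).integrableOn,
    integral_add (memLp_partialSum hL2 k).integrable_sq.integrableOn
      (hL2 k).integrable_sq.integrableOn, integral_const_mul, hcross, mul_zero, add_zero]

lemma submartingale_sq_partialSum [IsFiniteMeasure μ] (hX : ∀ i, Measurable (X i))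
    (hindep : iIndepFun X μ) (hL2 : ∀ i, MemLp (X i) 2 μ) (hmean : ∀ i, μ[X i] = 0) :
    Submartingale (fun m ω => partialSum X m ω ^ 2) (prefixFiltration X hX) μ := by
  refine submartingale_of_setIntegral_le_succ (fun m => (stronglyAdapted_partialSum hX m).pow 2)
    (fun m => (memLp_partialSum hL2 m).integrable_sq) fun m s hs => ?_
  rcases lt_or_ge m n with hm | hm
  · rw [setIntegral_sq_partialSum_succ hX hindep hL2 hmean ⟨m, hm⟩ hs]
    exact le_add_of_nonneg_right (setIntegral_nonneg ((prefixFiltration X hX).le m _ hs)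
      fun ω _ => sq_nonneg (X _ ω))
  · rw [partialSum_succ_of_le hm]

lemma integral_sq_partialSum_succ_sub (hX : ∀ i, Measurable (X i)) (hindep : iIndepFun X μ)
    (hL2 : ∀ i, MemLp (X i) 2 μ) (hmean : ∀ i, μ[X i] = 0) (k : Fin n) :
    ∫ ω, partialSum X (k + 1) ω ^ 2 ∂μ - ∫ ω, partialSum X k ω ^ 2 ∂μ = Var[X k; μ] := by
  have := setIntegral_sq_partialSum_succ hX hindep hL2 hmean k MeasurableSet.univ
  rw [setIntegral_univ, setIntegral_univ, setIntegral_univ] at this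
  rw [this, variance_of_integral_eq_zero (hX k).aemeasurable (hmean k)]
  ring

end ProbabilityTheory

lemma antitone_dite_of_nonneg {n : ℕ} {a : Fin n → ℝ} (ha : Antitone a) (ha0 : 0 ≤ a) :
    Antitone fun m : ℕ => if h : m < n then a ⟨m, h⟩ else 0 := by
  intro i j hij
  dsimp only
  split_ifs
  · exact ha (Fin.mk_le_mk.2 hij)
  · omega
  · exact ha0 _
  · rfl

/-- Hájek–Rényi inequality: for independent, square-integrable, mean-zero real
random variables `X 1, …, X n` and a non-increasing sequence of positive reals
`α k`, for every `t > 0`,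
`P(max_k α_k |S_k| ≥ t) ≤ t⁻² Σ α_k² Var(X_k)`, where `S_k = Σ_{i ≤ k} X i`. -/
theorem hajek_renyi_inequality {Ω : Type*} [MeasurableSpace Ω]
    (μ : Measure Ω) [IsProbabilityMeasure μ]
    (n : ℕ) (X : Fin n → Ω → ℝ)
    (hmeas : ∀ k, Measurable (X k))
    (hindep : iIndepFun X μ)
    (hL2 : ∀ k, MemLp (X k) 2 μ)
    (hmean : ∀ k, ∫ ω, X k ω ∂μ = 0)
    (α : Fin n → ℝ) (hαpos : ∀ k, 0 < α k)
    (hαanti : ∀ j k : Fin n, j ≤ k → α k ≤ α j)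
    (t : ℝ) (ht : 0 < t) :
    (μ {ω | ∃ k : Fin n,
        t ≤ α k * |∑ i ∈ Finset.univ.filter (· ≤ k), X i ω|}).toReal
      ≤ (∑ k, (α k) ^ 2 * variance (X k) μ) / t ^ 2 := by
  set c : ℕ → ℝ := fun m => if h : m < n then α ⟨m, h⟩ ^ 2 else 0
  have hc : Antitone c := antitone_dite_of_nonneg
    (fun j k hjk => pow_le_pow_left₀ (hαpos k).le (hαanti j k hjk) 2) fun k => sq_nonneg (α k)
  have hc_nonneg : 0 ≤ c := fun m => by dsimp only [c]; split_ifs <;> positivity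
  have hc_fin (k : Fin n) : c k = α k ^ 2 := dif_pos k.2
  have hsum : c 0 * ∫ ω, partialSum X 0 ω ^ 2 ∂μ + ∑ m ∈ range n, c m *
      (∫ ω, partialSum X (m + 1) ω ^ 2 ∂μ - ∫ ω, partialSum X m ω ^ 2 ∂μ)
      = ∑ k, α k ^ 2 * Var[X k; μ] := by
    rw [← Fin.sum_univ_eq_sum_range]
    simp_rw [hc_fin, integral_sq_partialSum_succ_sub hmeas hindep hL2 hmean]
    simp
  have key := (submartingale_sq_partialSum hmeas hindep hL2 hmean).mul_measureReal_exceedSet_le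
    (fun _ _ => sq_nonneg _) hc hc_nonneg n (t := t ^ 2)
  rw [setOf_exists_le_mul_abs_sum_eq_exceedSet (fun k => (hαpos k).le) ht.le,
    le_div_iff₀ (by positivity), ← hsum, mul_comm]
  exact key
end

section
/- Etemadi inequality (classical): if X_1, …, X_n are independent real random variables and S_k = Σ_{i=1}^k X_i, then for every t > 0, P(max_{1≤k≤n} |S_k| ≥ 3t) ≤ 3 max_{1≤k≤n} P(|S_k| ≥ t). -/
/-!
Let `A k` be the event that `|S k| ≥ 3t` for the first time at `k`, and let `N` be the last index.
On `A k`, either `|S N| ≥ t` or `|S N - S k| ≥ 2t`. The first alternative has total probability at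
most `P(|S N| ≥ t)`. The second one is independent of `A k`, since `A k` depends only on the `X i`
with `i ≤ k` and `S N - S k` only on those with `i > k`; its probability is at most
`P(|S N| ≥ t) + P(|S k| ≥ t)`, and summing over the disjoint events `A k` costs a factor
`∑ k, P(A k) ≤ 1`.
-/

open MeasureTheory ProbabilityTheory Finset
open scoped ENNReal

theorem le_abs_or_le_abs_of_add_le_abs_add {α : Type*} [AddCommGroup α] [LinearOrder α]
    [IsOrderedAddMonoid α] {a b r s : α} (h : r + s ≤ |a + b|) : r ≤ |a| ∨ s ≤ |b| := by
  by_contra! hlt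
  exact (h.trans (abs_add_le a b)).not_gt (add_lt_add hlt.1 hlt.2)

theorem measurableSet_disjointed {α ι : Type*} {m : MeasurableSpace α} [Preorder ι]
    [LocallyFiniteOrderBot ι] {f : ι → Set α} {k : ι} (hf : ∀ j ≤ k, MeasurableSet (f j)) :
    MeasurableSet (disjointed f k) := by
  rw [disjointed_apply, sup_set_eq_biUnion]
  exact (hf k le_rfl).diff <| Finset.measurableSet_biUnion _ fun j hj ↦ hf j (mem_Iio.1 hj).le

theorem measure_iUnion_le_add_of_indep {Ω ι : Type*} [MeasurableSpace Ω] [Countable ι]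
    {μ : Measure Ω} [IsProbabilityMeasure μ] {A D : ι → Set Ω} {E : Set Ω} {c : ℝ≥0∞}
    (hA : ∀ k, MeasurableSet (A k)) (hdisj : Pairwise (Function.onFun Disjoint A))
    (hE : MeasurableSet E) (hAD : ∀ k, μ (A k ∩ D k) = μ (A k) * μ (D k))
    (hD : ∀ k, μ (D k) ≤ c) (hsub : ∀ k, A k ⊆ E ∪ D k) :
    μ (⋃ k, A k) ≤ μ E + c := by
  have hAE : ∑' k, μ (A k ∩ E) ≤ μ E := by
    rw [← measure_iUnion (fun _ _ h ↦ (hdisj h).mono Set.inter_subset_left Set.inter_subset_left)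
      fun k ↦ (hA k).inter hE]
    exact measure_mono (Set.iUnion_subset fun k ↦ Set.inter_subset_right)
  have hsum : ∑' k, μ (A k) ≤ 1 := by
    rw [← measure_iUnion hdisj hA]
    exact prob_le_one
  calc μ (⋃ k, A k) = ∑' k, μ (A k) := measure_iUnion hdisj hA
    _ ≤ ∑' k, (μ (A k ∩ E) + μ (A k ∩ D k)) := by
      refine ENNReal.tsum_le_tsum fun k ↦ (measure_mono ?_).trans (measure_union_le _ _)
      exact fun ω hω ↦ (hsub k hω).imp (⟨hω, ·⟩) (⟨hω, ·⟩)
    _ = ∑' k, μ (A k ∩ E) + ∑' k, μ (A k) * μ (D k) := by simp only [hAD, ENNReal.tsum_add]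
    _ ≤ μ E + (∑' k, μ (A k)) * c := by
      rw [← ENNReal.tsum_mul_right]
      gcongr with k
      exact hD k
    _ ≤ μ E + c := by
      gcongr
      exact mul_le_of_le_one_left' hsum

section Comap

variable {Ω ι β : Type*} [mβ : MeasurableSpace β] {X : ι → Ω → β}

theorem ProbabilityTheory.iIndepFun.measure_inter_eq_mul_of_disjoint [MeasurableSpace Ω]
    {μ : Measure Ω} (hX : ∀ i, Measurable (X i)) (h : iIndepFun X μ) {S T : Set ι}
    (hST : Disjoint S T) {A B : Set Ω} (hA : MeasurableSet[⨆ i ∈ S, mβ.comap (X i)] A)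
    (hB : MeasurableSet[⨆ i ∈ T, mβ.comap (X i)] B) :
    μ (A ∩ B) = μ A * μ B :=
  (Indep_iff _ _ μ).1 (indep_iSup_of_disjoint (fun i ↦ (hX i).comap_le)
    ((iIndepFun_iff_iIndep _ X μ).1 h) hST) A B hA hB

theorem measurable_sum_iSup_comap [AddCommMonoid β] [MeasurableAdd₂ β] {s : Finset ι}
    {T : Set ι} (hs : ↑s ⊆ T) :
    Measurable[⨆ i ∈ T, mβ.comap (X i)] fun ω ↦ ∑ i ∈ s, X i ω :=
  Finset.measurable_sum s fun i hi ↦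
    (comap_measurable (X i)).mono (le_iSup₂ (f := fun i _ ↦ mβ.comap (X i)) i (hs hi)) le_rfl

theorem measurable_sum_Iic_iSup_comap_Iic [AddCommMonoid β] [MeasurableAdd₂ β] [Preorder ι]
    [LocallyFiniteOrderBot ι] {j k : ι} (hjk : j ≤ k) :
    Measurable[⨆ i ∈ Set.Iic k, mβ.comap (X i)] fun ω ↦ ∑ i ∈ Iic j, X i ω :=
  measurable_sum_iSup_comap fun _ hi ↦ (mem_Iic.1 hi).trans hjk

theorem measurable_sum_Iic_sub_sum_Iic_iSup_comap_Ioi [AddCommGroup β] [MeasurableAdd₂ β]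
    [LinearOrder ι] [LocallyFiniteOrderBot ι] {j k : ι} (hkj : k ≤ j) :
    Measurable[⨆ i ∈ Set.Ioi k, mβ.comap (X i)]
      fun ω ↦ ∑ i ∈ Iic j, X i ω - ∑ i ∈ Iic k, X i ω := by
  simp only [← sum_sdiff_eq_sub (Iic_subset_Iic.2 hkj)]
  exact measurable_sum_iSup_comap fun i hi ↦ (by simpa using hi : k < i ∧ i ≤ j).1

end Comap

theorem etemadi_inequality_Iic {Ω ι : Type*} [MeasurableSpace Ω] [LinearOrder ι] [OrderTop ι]
    [LocallyFiniteOrderBot ι] [Countable ι] {μ : Measure Ω} [IsProbabilityMeasure μ]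
    {X : ι → Ω → ℝ} (hX : ∀ i, Measurable (X i)) (hindep : iIndepFun X μ) (t : ℝ) :
    μ {ω | ∃ k, 3 * t ≤ |∑ i ∈ Iic k, X i ω|} ≤ 3 * ⨆ k, μ {ω | t ≤ |∑ i ∈ Iic k, X i ω|} := by
  set S : ι → Ω → ℝ := fun k ω ↦ ∑ i ∈ Iic k, X i ω
  set M := ⨆ k, μ {ω | t ≤ |S k ω|}
  have hM : ∀ k, μ {ω | t ≤ |S k ω|} ≤ M := le_iSup (fun k ↦ μ {ω | t ≤ |S k ω|})
  set B : ι → Set Ω := fun k ↦ {ω | 3 * t ≤ |S k ω|}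
  set D : ι → Set Ω := fun k ↦ {ω | 2 * t ≤ |S ⊤ ω - S k ω|}
  have hA : ∀ k, MeasurableSet[⨆ i ∈ Set.Iic k, MeasurableSpace.comap (X i) inferInstance]
      (disjointed B k) := fun k ↦ measurableSet_disjointed fun j hj ↦
    measurable_abs.comp (measurable_sum_Iic_iSup_comap_Iic hj) measurableSet_Ici
  have hAD : ∀ k, μ (disjointed B k ∩ D k) = μ (disjointed B k) * μ (D k) := fun k ↦
    hindep.measure_inter_eq_mul_of_disjoint hX (Set.Iic_disjoint_Ioi le_rfl) (hA k) <|
      measurable_abs.comp (measurable_sum_Iic_sub_sum_Iic_iSup_comap_Ioi le_top) measurableSet_Ici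
  have hD : ∀ k, μ (D k) ≤ 2 * M := fun k ↦ calc
    μ (D k) ≤ μ ({ω | t ≤ |S ⊤ ω|} ∪ {ω | t ≤ |S k ω|}) := by
      refine measure_mono fun ω (hω : 2 * t ≤ |S ⊤ ω - S k ω|) ↦ ?_
      rw [two_mul, sub_eq_add_neg] at hω
      show t ≤ |S ⊤ ω| ∨ t ≤ |S k ω|
      simpa only [abs_neg] using le_abs_or_le_abs_of_add_le_abs_add hω
    _ ≤ M + M := (measure_union_le _ _).trans (add_le_add (hM ⊤) (hM k))
    _ = 2 * M := (two_mul M).symm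
  have hsub : ∀ k, disjointed B k ⊆ {ω | t ≤ |S ⊤ ω|} ∪ D k := fun k ω hω ↦ by
    have hk : 3 * t ≤ |S k ω| := disjointed_subset B k hω
    have h3 : t + 2 * t ≤ |S ⊤ ω + (S k ω - S ⊤ ω)| := by
      rw [add_sub_cancel]
      linarith
    show t ≤ |S ⊤ ω| ∨ 2 * t ≤ |S ⊤ ω - S k ω|
    rw [abs_sub_comm]
    exact le_abs_or_le_abs_of_add_le_abs_add h3
  calc μ {ω | ∃ k, 3 * t ≤ |S k ω|} = μ (⋃ k, disjointed B k) := by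
        rw [iUnion_disjointed]; congr 1; ext; simp [B]
    _ ≤ μ {ω | t ≤ |S ⊤ ω|} + 2 * M :=
      measure_iUnion_le_add_of_indep (fun k ↦ iSup₂_le (fun i _ ↦ (hX i).comap_le) _ (hA k))
        (disjoint_disjointed B) ((Finset.measurable_sum _ fun i _ ↦ hX i).abs measurableSet_Ici)
        hAD hD hsub
    _ ≤ M + 2 * M := by gcongr; exact hM ⊤
    _ = 3 * M := by ring

theorem etemadi_inequality_general {Ω : Type*} [MeasurableSpace Ω]
    (μ : Measure Ω) [IsProbabilityMeasure μ]
    (n : ℕ) (X : Fin n → Ω → ℝ)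
    (hmeas : ∀ k, Measurable (X k))
    (hindep : iIndepFun X μ)
    (t : ℝ) :
    μ {ω | ∃ k : Fin n,
        3 * t ≤ |∑ i ∈ Finset.univ.filter (· ≤ k), X i ω|}
      ≤ 3 * ⨆ k : Fin n,
          μ {ω | t ≤ |∑ i ∈ Finset.univ.filter (· ≤ k), X i ω|} := by
  cases n with
  | zero => simp
  | succ m => simpa only [filter_ge_eq_Iic] using etemadi_inequality_Iic hmeas hindep t

/-- Etemadi's inequality: for independent real random variables `X 1, …, X n`
with partial sums `S k = Σ_{i ≤ k} X i`, for every `t > 0`,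
`P(max_k |S_k| ≥ 3t) ≤ 3 max_k P(|S_k| ≥ t)`. -/
theorem etemadi_inequality {Ω : Type*} [MeasurableSpace Ω]
    (μ : Measure Ω) [IsProbabilityMeasure μ]
    (n : ℕ) (X : Fin n → Ω → ℝ)
    (hmeas : ∀ k, Measurable (X k))
    (hindep : iIndepFun X μ)
    (t : ℝ) (ht : 0 < t) :
    μ {ω | ∃ k : Fin n,
        3 * t ≤ |∑ i ∈ Finset.univ.filter (· ≤ k), X i ω|}
      ≤ 3 * ⨆ k : Fin n,
          μ {ω | t ≤ |∑ i ∈ Finset.univ.filter (· ≤ k), X i ω|} :=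
  etemadi_inequality_general μ n X hmeas hindep t
end

section
/- Unit-bound comparison of spectral projections: for commuting self-adjoint operators a, b with spectral projections, if ⟨|a|ξ,ξ⟩ ≥ 3λ and ⟨|b|ξ,ξ⟩ ≤ λ for a unit vector ξ, then ⟨|b − a|ξ,ξ⟩ ≥ 2λ; consequently, for projections p ≤ 1_{[3λ,∞)}(|a|), one has p ∧ 1_{[0,λ]}(|b|) ≤ p ∧ 1_{[2λ,∞)}(|b − a|). -/
/-!
For commuting self-adjoint `x, y` one has `x y ≤ |x y| = |x| |y|`, hence
`(x + y)² ≤ (|x| + |y|)²`, and operator monotonicity of the square root gives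
`|x + y| ≤ |x| + |y|`. Applied to `a = b - (b - a)` this is `|a| ≤ |b| + |b - a|`;
evaluating at `ξ` gives `⟨|a|ξ, ξ⟩ ≤ ⟨|b|ξ, ξ⟩ + ⟨|b - a|ξ, ξ⟩`, from which both claims follow
linearly.
-/

namespace CFC

variable {A : Type*} [CStarAlgebra A] [PartialOrder A] [StarOrderedRing A]

lemma abs_eq_of_mul_self_eq {a b : A} (ha : IsSelfAdjoint a) (hb : 0 ≤ b) (h : b * b = a * a) :
    abs a = b := by
  rw [abs, ha.star_eq, ← h, sqrt_mul_self b hb]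

lemma le_abs_of_isSelfAdjoint {a : A} (ha : IsSelfAdjoint a) : a ≤ abs a := by
  rw [← sub_nonneg, abs_sub_self a ha]
  exact smul_nonneg zero_le_two (negPart_nonneg a)

lemma abs_add_le_of_commute {x y : A} (hx : IsSelfAdjoint x) (hy : IsSelfAdjoint y)
    (h : Commute x y) : abs (x + y) ≤ abs x + abs y := by
  have hxy : Commute x (star y) := hy.star_eq.symm ▸ h
  have habs : Commute (abs x) (abs y) := h.cfcAbs_cfcAbs hxy
  have hmul : x * y ≤ abs x * abs y := by
    rw [← h.cfcAbs_mul_eq hxy]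
    exact le_abs_of_isSelfAdjoint ((hx.commute_iff hy).mp h)
  have hsq : (x + y) * (x + y) ≤ (abs x + abs y) * (abs x + abs y) := calc
    (x + y) * (x + y) = x * x + y * y + 2 • (x * y) := by
      rw [add_mul, mul_add, mul_add, ← h.eq, two_smul]; abel
    _ ≤ x * x + y * y + 2 • (abs x * abs y) := by gcongr
    _ = (abs x + abs y) * (abs x + abs y) := by
      rw [add_mul, mul_add, mul_add, ← habs.eq, two_smul, abs_mul_abs, abs_mul_abs, hx.star_eq,
        hy.star_eq]
      abel
  rw [abs, (hx.add hy).star_eq,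
    ← sqrt_mul_self (abs x + abs y) (add_nonneg (abs_nonneg x) (abs_nonneg y))]
  exact sqrt_le_sqrt _ _ hsq

lemma abs_sub_le_of_commute {x y : A} (hx : IsSelfAdjoint x) (hy : IsSelfAdjoint y)
    (h : Commute x y) : abs (x - y) ≤ abs x + abs y := by
  simpa [sub_eq_add_neg, abs_neg] using abs_add_le_of_commute hx hy.neg h.neg_right

end CFC

lemma ContinuousLinearMap.re_inner_le_of_le {𝕜 E : Type*} [RCLike 𝕜] [NormedAddCommGroup E]
    [InnerProductSpace 𝕜 E] {S T : E →L[𝕜] E} (h : S ≤ T) (x : E) :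
    RCLike.re (inner 𝕜 (S x) x) ≤ RCLike.re (inner 𝕜 (T x) x) := by
  have := ((le_def S T).mp h).re_inner_nonneg_left x
  rwa [sub_apply, inner_sub_left, map_sub, sub_nonneg] at this

theorem spectral_projection_comparison_general {H : Type*} [NormedAddCommGroup H]
    [InnerProductSpace ℂ H] [CompleteSpace H]
    (a b absa absb absd : H →L[ℂ] H)
    (ha : IsSelfAdjoint a) (hb : IsSelfAdjoint b) (hcomm : a * b = b * a)
    (habsa : absa.IsPositive) (habsa2 : absa * absa = a * a)
    (habsb : absb.IsPositive) (habsb2 : absb * absb = b * b)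
    (habsd : absd.IsPositive) (habsd2 : absd * absd = (b - a) * (b - a))
    (lam : ℝ)
    (p q r : H →L[ℂ] H)
    -- `p ≤ 1_{[3λ,∞)}(|a|)` : on the range of `p`, `|a| ≥ 3λ`
    (hpa : ∀ ξ : H, p ξ = ξ → 3 * lam * ‖ξ‖ ^ 2 ≤ ((inner ℂ (absa ξ) ξ : ℂ)).re)
    -- `q = 1_{[0,λ]}(|b|)` : on the range of `q`, `|b| ≤ λ`
    (hqb : ∀ ξ : H, q ξ = ξ → ((inner ℂ (absb ξ) ξ : ℂ)).re ≤ lam * ‖ξ‖ ^ 2)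
    -- `r = 1_{[2λ,∞)}(|b − a|)` : vectors on which `|b − a| ≥ 2λ` lie in its range
    (hrd : ∀ ξ : H, 2 * lam * ‖ξ‖ ^ 2 ≤ ((inner ℂ (absd ξ) ξ : ℂ)).re → r ξ = ξ) :
    (∀ ξ : H, ‖ξ‖ = 1 → 3 * lam ≤ ((inner ℂ (absa ξ) ξ : ℂ)).re →
      ((inner ℂ (absb ξ) ξ : ℂ)).re ≤ lam → 2 * lam ≤ ((inner ℂ (absd ξ) ξ : ℂ)).re) ∧
    (∀ ξ : H, p ξ = ξ → q ξ = ξ → r ξ = ξ) := by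
  have nonneg (T : H →L[ℂ] H) : T.IsPositive → 0 ≤ T :=
    (ContinuousLinearMap.nonneg_iff_isPositive T).mpr
  have hle : absa ≤ absb + absd := by
    rw [← CFC.abs_eq_of_mul_self_eq ha (nonneg _ habsa) habsa2,
      ← CFC.abs_eq_of_mul_self_eq hb (nonneg _ habsb) habsb2,
      ← CFC.abs_eq_of_mul_self_eq (hb.sub ha) (nonneg _ habsd) habsd2]
    simpa only [sub_sub_cancel] using
      CFC.abs_sub_le_of_commute hb (hb.sub ha) ((Commute.refl b).sub_right (Commute.symm hcomm))
  have key (ξ : H) :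
      (inner ℂ (absa ξ) ξ).re ≤ (inner ℂ (absb ξ) ξ).re + (inner ℂ (absd ξ) ξ).re := by
    simpa only [add_apply, inner_add_left, map_add, RCLike.re_to_complex]
      using ContinuousLinearMap.re_inner_le_of_le hle ξ
  refine ⟨fun ξ _ h3 h1 => by linarith [key ξ], fun ξ hpξ hqξ => hrd ξ ?_⟩
  linarith [key ξ, hpa ξ hpξ, hqb ξ hqξ]

/-- Unit-bound comparison of spectral projections: for commuting self-adjoint
operators `a, b` with `|a|, |b|, |b − a|` their absolute values (the positive
square roots of the squares), if a unit vector `ξ` satisfies `⟨|a|ξ, ξ⟩ ≥ 3λ` and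
`⟨|b|ξ, ξ⟩ ≤ λ`, then `⟨|b − a|ξ, ξ⟩ ≥ 2λ`.  Consequently, for a projection
`p ≤ 1_{[3λ,∞)}(|a|)`, one has `p ∧ 1_{[0,λ]}(|b|) ≤ p ∧ 1_{[2λ,∞)}(|b − a|)`;
here the spectral projections `q = 1_{[0,λ]}(|b|)` and `r = 1_{[2λ,∞)}(|b−a|)`
are characterized by their range properties. -/
theorem spectral_projection_comparison {H : Type*} [NormedAddCommGroup H]
    [InnerProductSpace ℂ H] [CompleteSpace H]
    (a b absa absb absd : H →L[ℂ] H)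
    (ha : IsSelfAdjoint a) (hb : IsSelfAdjoint b) (hcomm : a * b = b * a)
    (habsa : absa.IsPositive) (habsa2 : absa * absa = a * a)
    (habsb : absb.IsPositive) (habsb2 : absb * absb = b * b)
    (habsd : absd.IsPositive) (habsd2 : absd * absd = (b - a) * (b - a))
    (lam : ℝ) (hlam : 0 < lam)
    (p q r : H →L[ℂ] H)
    (hp : IsIdempotentElem p) (hpsa : IsSelfAdjoint p)
    (hq : IsIdempotentElem q) (hqsa : IsSelfAdjoint q)
    (hr : IsIdempotentElem r) (hrsa : IsSelfAdjoint r)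
    -- `p ≤ 1_{[3λ,∞)}(|a|)` : on the range of `p`, `|a| ≥ 3λ`
    (hpa : ∀ ξ : H, p ξ = ξ → 3 * lam * ‖ξ‖ ^ 2 ≤ ((inner ℂ (absa ξ) ξ : ℂ)).re)
    -- `q = 1_{[0,λ]}(|b|)` : on the range of `q`, `|b| ≤ λ`
    (hqb : ∀ ξ : H, q ξ = ξ → ((inner ℂ (absb ξ) ξ : ℂ)).re ≤ lam * ‖ξ‖ ^ 2)
    -- `r = 1_{[2λ,∞)}(|b − a|)` : vectors on which `|b − a| ≥ 2λ` lie in its range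
    (hrd : ∀ ξ : H, 2 * lam * ‖ξ‖ ^ 2 ≤ ((inner ℂ (absd ξ) ξ : ℂ)).re → r ξ = ξ) :
    (∀ ξ : H, ‖ξ‖ = 1 → 3 * lam ≤ ((inner ℂ (absa ξ) ξ : ℂ)).re →
      ((inner ℂ (absb ξ) ξ : ℂ)).re ≤ lam → 2 * lam ≤ ((inner ℂ (absd ξ) ξ : ℂ)).re) ∧
    (∀ ξ : H, p ξ = ξ → q ξ = ξ → r ξ = ξ) :=
  spectral_projection_comparison_general a b absa absb absd ha hb hcomm habsa habsa2 habsb habsb2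
    habsd habsd2 lam p q r hpa hqb hrd
end
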